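/- Rational approximation at the origin (from the proof of Lemma 4.1). Let r : ℝ → ℂ be a Schwartz-class function satisfying r(k) = −conj(r(−k)) for all k ∈ ℝ, and let N ≥ 1 be an integer. Then there exist real numbers {a_j, b_j}_{j=0}^{2N+1} such that the rational function r₀(k) := (k²+1)^{−(3N+4)} Σ_{j=0}^{2N+1} (a_j k + i b_j) k^{2j}, which is analytic on ℂ \ {i, −i}, satisfies r₀(k) = −conj(r₀(−conj(k))) for all k ∈ ℂ \ {i, −i}, and the function f := r − r₀ on ℝ satisfies, for some constant C > 0 and every n = 0, 1, …, N+1: |f^{(n)}(k)| ≤ C |k|^{4N+4−n} for all real k with |k| ≤ 1, and |f^{(n)}(k)| ≤ C |k|^{−2N−5} for all real k with |k| ≥ 1. -/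

import Mathlib

/-!
Put `M = 3N + 4`, `w(x) = (x² + 1)^M r(x)` and let `Q` be the Taylor polynomial of `w` at `0` of
degree `4N + 3`; then `r₀ = Q / (z² + 1)^M`. The symmetry `r(k) = -conj r(-k)` passes to `w`, so
the `m`-th Taylor coefficient `c` of `w` satisfies `c = -(-1)^m conj c`: odd coefficients are real
and even ones imaginary, which is the shape of `r₀` and gives its symmetry.

Near `0`, `r - r₀ = (w - Q) / (x² + 1)^M` has vanishing derivatives up to order `4N + 3`, so
repeated use of the mean value inequality gives the bound `C |k|^(4N+4-n)`. Near infinity, `r` is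
Schwartz, and the `n`-th derivative of `r₀` is `Pₙ / (x² + 1)^(M+n)` with `deg Pₙ ≤ 4N + 3 + n`,
which decays like `|k|^(-(2N+5))`.
-/

open Set
open Complex Polynomial
open scoped ContDiff Nat ComplexConjugate

lemma iteratedDeriv_conj (f : ℝ → ℂ) (n : ℕ) (x : ℝ) :
    iteratedDeriv n (fun t => conj (f t)) x = conj (iteratedDeriv n f x) := by
  simp only [iteratedDeriv_eq_iteratedFDeriv, ← iteratedFDerivWithin_univ]
  exact congrArg (· fun _ => 1)
    (conjCLE.iteratedFDerivWithin_comp_left f uniqueDiffOn_univ (mem_univ x) n)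

lemma iteratedDeriv_zero_of_conj_symm {w : ℝ → ℂ} (hw : ∀ x, w x = -conj (w (-x))) (m : ℕ) :
    iteratedDeriv m w 0 = -((-1) ^ m * conj (iteratedDeriv m w 0)) := by
  conv_lhs => rw [show w = fun x => -conj (w (-x)) from funext hw]
  rw [iteratedDeriv_fun_neg, iteratedDeriv_comp_neg (f := fun t => conj (w t)), neg_zero,
    iteratedDeriv_conj, real_smul]
  push_cast
  rfl

lemma conj_symm_sq_add_one_pow_mul {r : ℝ → ℂ} (hr : ∀ x, r x = -conj (r (-x))) (M : ℕ) (x : ℝ) :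
    ((x : ℂ) ^ 2 + 1) ^ M * r x = -conj (((((-x : ℝ) : ℂ)) ^ 2 + 1) ^ M * r (-x)) := by
  rw [hr x]
  simp

noncomputable def taylorCoeff (f : ℝ → ℂ) (m : ℕ) : ℂ := iteratedDeriv m f 0 / m !

noncomputable def taylorPoly (f : ℝ → ℂ) (D : ℕ) : ℂ[X] :=
  ∑ m ∈ Finset.range D, C (taylorCoeff f m) * X ^ m

lemma taylorCoeff_of_conj_symm {w : ℝ → ℂ} (hw : ∀ x, w x = -conj (w (-x))) (m : ℕ) :
    taylorCoeff w m = -((-1) ^ m * conj (taylorCoeff w m)) := by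
  rw [taylorCoeff, map_div₀, map_natCast]
  conv_lhs => rw [iteratedDeriv_zero_of_conj_symm hw m]
  ring

lemma ofReal_re_taylorCoeff_odd {w : ℝ → ℂ} (hw : ∀ x, w x = -conj (w (-x))) (j : ℕ) :
    ((taylorCoeff w (2 * j + 1)).re : ℂ) = taylorCoeff w (2 * j + 1) := by
  have h := taylorCoeff_of_conj_symm hw (2 * j + 1)
  rw [Odd.neg_one_pow (odd_two_mul_add_one j), neg_one_mul, neg_neg] at h
  exact conj_eq_iff_re.mp h.symm

lemma I_mul_im_taylorCoeff_even {w : ℝ → ℂ} (hw : ∀ x, w x = -conj (w (-x))) (j : ℕ) :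
    I * (taylorCoeff w (2 * j)).im = taylorCoeff w (2 * j) := by
  have h := congrArg re (taylorCoeff_of_conj_symm hw (2 * j))
  rw [Even.neg_one_pow (even_two_mul j), one_mul, neg_re, conj_re] at h
  apply Complex.ext
  · simp only [mul_re, I_re, ofReal_re, zero_mul, I_im, ofReal_im, mul_zero, sub_self]
    linarith
  · simp

lemma eval_taylorPoly (f : ℝ → ℂ) (D : ℕ) (z : ℂ) :
    (taylorPoly f D).eval z = ∑ m ∈ Finset.range D, taylorCoeff f m * z ^ m := by
  simp [taylorPoly, eval_finsetSum]

lemma coeff_taylorPoly (f : ℝ → ℂ) {D m : ℕ} (hm : m < D) :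
    (taylorPoly f D).coeff m = taylorCoeff f m := by
  simp [taylorPoly, finsetSum_coeff, coeff_C_mul, coeff_X_pow, Finset.mem_range.mpr hm]

lemma natDegree_taylorPoly_le (f : ℝ → ℂ) (D : ℕ) : (taylorPoly f D).natDegree ≤ D - 1 :=
  natDegree_sum_le_of_forall_le _ _ fun m hm =>
    (natDegree_C_mul_X_pow_le _ _).trans (by have := Finset.mem_range.mp hm; omega)

lemma Finset.sum_range_two_mul {M : Type*} [AddCommMonoid M] (f : ℕ → M) (J : ℕ) :
    ∑ m ∈ Finset.range (2 * J), f m = ∑ j ∈ Finset.range J, (f (2 * j + 1) + f (2 * j)) := by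
  induction J with
  | zero => simp
  | succ J ih =>
    rw [show 2 * (J + 1) = 2 * J + 1 + 1 by ring, Finset.sum_range_succ, Finset.sum_range_succ,
      ih, Finset.sum_range_succ]
    abel

lemma eval_taylorPoly_of_conj_symm {w : ℝ → ℂ} (hw : ∀ x, w x = -conj (w (-x))) (J : ℕ)
    (z : ℂ) : (taylorPoly w (2 * J)).eval z = ∑ j ∈ Finset.range J,
      (((taylorCoeff w (2 * j + 1)).re : ℂ) * z + I * (taylorCoeff w (2 * j)).im) *
        z ^ (2 * j) := by
  rw [eval_taylorPoly, Finset.sum_range_two_mul]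
  refine Finset.sum_congr rfl fun j _ => ?_
  rw [ofReal_re_taylorCoeff_odd hw, I_mul_im_taylorCoeff_even hw]
  ring

lemma conj_eval_taylorPoly_neg_conj {w : ℝ → ℂ} (hw : ∀ x, w x = -conj (w (-x))) (D : ℕ)
    (z : ℂ) : conj ((taylorPoly w D).eval (-conj z)) = -(taylorPoly w D).eval z := by
  simp only [eval_taylorPoly, map_sum, ← Finset.sum_neg_distrib]
  refine Finset.sum_congr rfl fun m _ => ?_
  conv_rhs => rw [taylorCoeff_of_conj_symm hw m]
  simp only [map_mul, map_pow, map_neg, map_one, conj_conj, neg_pow (conj z)]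
  ring

lemma iteratedDeriv_mul_eq_zero {𝕜 𝔸 : Type*} [NontriviallyNormedField 𝕜] [NormedCommRing 𝔸]
    [NormedAlgebra 𝕜 𝔸] {f g : 𝕜 → 𝔸} {n : ℕ} {x : 𝕜} (hf : ContDiffAt 𝕜 n f x)
    (hg : ContDiffAt 𝕜 n g x) (h : ∀ i ≤ n, iteratedDeriv i f x = 0) :
    iteratedDeriv n (f * g) x = 0 := by
  rw [iteratedDeriv_mul hf hg]
  exact Finset.sum_eq_zero fun i hi => by
    rw [h i (Nat.lt_succ_iff.mp (Finset.mem_range.mp hi)), mul_zero, zero_mul]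

lemma norm_iteratedDeriv_le_mul_abs_pow {E : Type*} [NormedAddCommGroup E] [NormedSpace ℝ E]
    {f : ℝ → E} {D : ℕ} (hf : ContDiff ℝ (D + 1) f)
    (hzero : ∀ m ≤ D, iteratedDeriv m f 0 = 0) {M : ℝ}
    (hM : ∀ t, |t| ≤ 1 → ‖iteratedDeriv (D + 1) f t‖ ≤ M) {n : ℕ} (hn : n ≤ D + 1) {k : ℝ}
    (hk : |k| ≤ 1) : ‖iteratedDeriv n f k‖ ≤ M * |k| ^ (D + 1 - n) := by
  have hM0 : 0 ≤ M := (norm_nonneg _).trans (hM 0 (by simp))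
  obtain ⟨i, hi, rfl⟩ : ∃ i ≤ D + 1, n = D + 1 - i := ⟨D + 1 - n, by omega, by omega⟩
  clear hn
  rw [Nat.sub_sub_self hi]
  induction i generalizing k with
  | zero => simpa using hM k hk
  | succ i ih =>
    have hbound : ∀ t ∈ uIcc 0 k,
        ‖deriv (iteratedDeriv (D + 1 - (i + 1)) f) t‖ ≤ M * |k| ^ i := by
      intro t ht
      have htk : |t| ≤ |k| := by simpa using abs_sub_left_of_mem_uIcc ht
      rw [← iteratedDeriv_succ, show D + 1 - (i + 1) + 1 = D + 1 - i by omega]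
      exact (ih (htk.trans hk) (by omega)).trans (by gcongr)
    have hmvt := (convex_uIcc 0 k).norm_image_sub_le_of_norm_deriv_le
      (fun t _ => hf.differentiable_iteratedDeriv _ (by norm_cast; omega) t) hbound
      left_mem_uIcc right_mem_uIcc
    rw [hzero _ (by omega), sub_zero, sub_zero, Real.norm_eq_abs] at hmvt
    rwa [pow_succ, ← mul_assoc]

lemma iteratedDeriv_eval_ofReal (p : ℂ[X]) (m : ℕ) (x : ℝ) :
    iteratedDeriv m (fun t : ℝ => p.eval (t : ℂ)) x = (derivative^[m] p).eval (x : ℂ) := by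
  induction m generalizing p with
  | zero => simp
  | succ m ih =>
    have hderiv : deriv (fun t : ℝ => p.eval (t : ℂ)) = fun t : ℝ => (derivative p).eval (t : ℂ) :=
      funext fun t => ((p.hasDerivAt (t : ℂ)).comp_ofReal).deriv
    rw [iteratedDeriv_succ', hderiv, ih, Function.iterate_succ_apply]

lemma iteratedDeriv_eval_ofReal_zero (p : ℂ[X]) (m : ℕ) :
    iteratedDeriv m (fun t : ℝ => p.eval (t : ℂ)) 0 = m ! * p.coeff m := by
  rw [iteratedDeriv_eval_ofReal, ofReal_zero, ← coeff_zero_eq_eval_zero, coeff_iterate_derivative,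
    zero_add, Nat.descFactorial_self, nsmul_eq_mul]

lemma iteratedDeriv_eval_taylorPoly_zero (f : ℝ → ℂ) {D m : ℕ} (hm : m < D) :
    iteratedDeriv m (fun t : ℝ => (taylorPoly f D).eval (t : ℂ)) 0 = iteratedDeriv m f 0 := by
  rw [iteratedDeriv_eval_ofReal_zero, coeff_taylorPoly f hm, taylorCoeff,
    mul_div_cancel₀ _ (Nat.cast_ne_zero.mpr m.factorial_ne_zero)]

lemma contDiff_eval_ofReal (p : ℂ[X]) : ContDiff ℝ ∞ (fun t : ℝ => p.eval (t : ℂ)) :=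
  ((p.differentiable.contDiff).restrict_scalars ℝ).comp ofRealCLM.contDiff

lemma ofReal_sq_add_one_ne_zero (x : ℝ) : (x : ℂ) ^ 2 + 1 ≠ 0 := by
  norm_cast; positivity

lemma norm_ofReal_sq_add_one_pow (x : ℝ) (m : ℕ) : ‖((x : ℂ) ^ 2 + 1) ^ m‖ = (x ^ 2 + 1) ^ m := by
  norm_cast
  rw [Real.norm_of_nonneg (by positivity)]

lemma contDiff_sq_add_one_pow (M : ℕ) : ContDiff ℝ ∞ (fun t : ℝ => ((t : ℂ) ^ 2 + 1) ^ M) :=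
  ((ofRealCLM.contDiff.pow 2).add contDiff_const).pow M

lemma contDiff_inv_sq_add_one_pow (M : ℕ) :
    ContDiff ℝ ∞ (fun t : ℝ => (((t : ℂ) ^ 2 + 1) ^ M)⁻¹) :=
  (contDiff_sq_add_one_pow M).inv fun t => pow_ne_zero M (ofReal_sq_add_one_ne_zero t)

lemma hasDerivAt_eval_div_sq_add_one_pow (p : ℂ[X]) (m : ℕ) {z : ℂ} (hz : z ^ 2 + 1 ≠ 0) :
    HasDerivAt (fun w => p.eval w / (w ^ 2 + 1) ^ m)
      ((derivative p * (X ^ 2 + 1) - C (2 * m : ℂ) * X * p).eval z / (z ^ 2 + 1) ^ (m + 1)) z := by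
  have hq : HasDerivAt (fun w : ℂ => w ^ 2 + 1) (2 * z) z := by
    simpa using (hasDerivAt_pow 2 z).add_const 1
  refine ((p.hasDerivAt z).div (hq.pow m) (pow_ne_zero m hz)).congr_deriv ?_
  simp only [Pi.pow_apply, eval_sub, eval_mul, eval_add, eval_pow, eval_X, eval_one, eval_C]
  rcases m with _ | m
  · field_simp
    simp
  · push_cast
    field_simp
    ring

/-- Numerator of the `n`-th derivative of `p / (X ^ 2 + 1) ^ M`, whose denominator is
`(X ^ 2 + 1) ^ (M + n)`. -/
noncomputable def derivNum (M : ℕ) (p : ℂ[X]) : ℕ → ℂ[X]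
  | 0 => p
  | n + 1 =>
    derivative (derivNum M p n) * (X ^ 2 + 1) - C (2 * (M + n : ℕ) : ℂ) * X * derivNum M p n

lemma iteratedDeriv_eval_div_sq_add_one_pow (p : ℂ[X]) (M n : ℕ) (x : ℝ) :
    iteratedDeriv n (fun t : ℝ => p.eval (t : ℂ) / ((t : ℂ) ^ 2 + 1) ^ M) x
      = (derivNum M p n).eval (x : ℂ) / ((x : ℂ) ^ 2 + 1) ^ (M + n) := by
  induction n generalizing x with
  | zero => simp [derivNum]
  | succ n ih =>
    rw [iteratedDeriv_succ, funext ih]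
    exact ((hasDerivAt_eval_div_sq_add_one_pow _ (M + n)
      (ofReal_sq_add_one_ne_zero x)).comp_ofReal).deriv

lemma natDegree_derivNum_le (M : ℕ) (p : ℂ[X]) (n : ℕ) :
    (derivNum M p n).natDegree ≤ p.natDegree + n := by
  induction n with
  | zero => simp [derivNum]
  | succ n ih =>
    set q := derivNum M p n
    have hderiv : (derivative q * (X ^ 2 + 1)).natDegree ≤ p.natDegree + n + 1 := by
      by_cases hq : q.natDegree = 0
      · simp [derivative_of_natDegree_zero hq]
      · refine natDegree_mul_le.trans ?_
        have := natDegree_derivative_le q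
        have : (X ^ 2 + 1 : ℂ[X]).natDegree ≤ 2 := by compute_degree
        omega
    have hmul : (C (2 * (M + n : ℕ) : ℂ) * X * q).natDegree ≤ p.natDegree + n + 1 := by
      refine natDegree_mul_le.trans ?_
      have : (C (2 * (M + n : ℕ) : ℂ) * X).natDegree ≤ 1 := by compute_degree
      omega
    exact (natDegree_sub_le _ _).trans (max_le hderiv hmul)

lemma exists_norm_eval_le_mul_pow (p : ℂ[X]) : ∃ B, ∀ z : ℂ, 1 ≤ ‖z‖ →
    ‖p.eval z‖ ≤ B * ‖z‖ ^ p.natDegree := by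
  refine ⟨∑ m ∈ Finset.range (p.natDegree + 1), ‖p.coeff m‖, fun z hz => ?_⟩
  rw [eval_eq_sum_range, Finset.sum_mul]
  refine (norm_sum_le _ _).trans (Finset.sum_le_sum fun m hm => ?_)
  rw [norm_mul, norm_pow]
  gcongr
  exact Nat.lt_succ_iff.mp (Finset.mem_range.mp hm)

lemma exists_norm_iteratedDeriv_eval_div_le (p : ℂ[X]) (M n e : ℕ)
    (hdeg : p.natDegree + n + e ≤ 2 * (M + n)) : ∃ B, ∀ k : ℝ, 1 ≤ |k| →
      ‖iteratedDeriv n (fun t : ℝ => p.eval (t : ℂ) / ((t : ℂ) ^ 2 + 1) ^ M) k‖ ≤ B / |k| ^ e := by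
  obtain ⟨B, hB⟩ := exists_norm_eval_le_mul_pow (derivNum M p n)
  refine ⟨B, fun k hk => ?_⟩
  have hk0 : 0 < |k| := one_pos.trans_le hk
  have hnum := hB k (by simpa using hk)
  rw [norm_real, Real.norm_eq_abs] at hnum
  have hB0 : 0 ≤ B := nonneg_of_mul_nonneg_left ((norm_nonneg _).trans hnum) (by positivity)
  rw [iteratedDeriv_eval_div_sq_add_one_pow, norm_div, norm_ofReal_sq_add_one_pow,
    div_le_div_iff₀ (by positivity) (by positivity)]
  have hdeg' := natDegree_derivNum_le M p n
  calc ‖(derivNum M p n).eval (k : ℂ)‖ * |k| ^ e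
      ≤ B * |k| ^ (2 * (M + n)) := by
        grw [hnum, mul_assoc, ← pow_add]
        gcongr
        omega
    _ ≤ B * (k ^ 2 + 1) ^ (M + n) := by
        rw [pow_mul, sq_abs]
        gcongr
        linarith

lemma differentiableOn_eval_div_sq_add_one_pow (p : ℂ[X]) (M : ℕ) :
    DifferentiableOn ℂ (fun z => p.eval z / (z ^ 2 + 1) ^ M) {I, -I}ᶜ := fun z hz => by
  have hz2 : z ^ 2 + 1 ≠ 0 := fun h => by
    have : z ^ 2 = I ^ 2 := by rw [I_sq]; linear_combination h
    rcases sq_eq_sq_iff_eq_or_eq_neg.mp this with rfl | rfl <;> simp at hz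
  exact (p.differentiableAt.div (d := fun w => (w ^ 2 + 1) ^ M) (by fun_prop)
    (pow_ne_zero M hz2)).differentiableWithinAt

lemma eval_div_sq_add_one_pow_of_conj_symm {p : ℂ[X]}
    (hp : ∀ z, conj (p.eval (-conj z)) = -p.eval z) (M : ℕ) (z : ℂ) :
    p.eval z / (z ^ 2 + 1) ^ M = -conj (p.eval (-conj z) / ((-conj z) ^ 2 + 1) ^ M) := by
  rw [map_div₀, hp]
  simp [neg_div]

lemma exists_norm_iteratedDeriv_sub_taylor_div_le {r : ℝ → ℂ} (hr : ContDiff ℝ ∞ r) (M D : ℕ) :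
    ∃ C, ∀ n ≤ D + 1, ∀ k : ℝ, |k| ≤ 1 → ‖iteratedDeriv n (fun x : ℝ => r x -
      (taylorPoly (fun x : ℝ => ((x : ℂ) ^ 2 + 1) ^ M * r x) (D + 1)).eval (x : ℂ) /
        ((x : ℂ) ^ 2 + 1) ^ M) k‖ ≤ C * |k| ^ (D + 1 - n) := by
  set w := fun x : ℝ => ((x : ℂ) ^ 2 + 1) ^ M * r x
  set Q := taylorPoly w (D + 1)
  have hw : ContDiff ℝ ∞ w := (contDiff_sq_add_one_pow M).mul hr
  have hfactor : (fun x : ℝ => r x - Q.eval (x : ℂ) / ((x : ℂ) ^ 2 + 1) ^ M) =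
      (fun x : ℝ => w x - Q.eval (x : ℂ)) * fun x : ℝ => (((x : ℂ) ^ 2 + 1) ^ M)⁻¹ := by
    funext x
    have := pow_ne_zero M (ofReal_sq_add_one_ne_zero x)
    simp only [Pi.mul_apply, w]
    field_simp
  have hzero : ∀ m ≤ D, iteratedDeriv m (fun x : ℝ => r x - Q.eval (x : ℂ) /
      ((x : ℂ) ^ 2 + 1) ^ M) 0 = 0 := fun m hm => by
    rw [hfactor]
    refine iteratedDeriv_mul_eq_zero
      (contDiff_infty.mp (hw.sub (contDiff_eval_ofReal Q)) m).contDiffAt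
      (contDiff_infty.mp (contDiff_inv_sq_add_one_pow M) m).contDiffAt fun i hi => ?_
    rw [iteratedDeriv_fun_sub (contDiff_infty.mp hw i).contDiffAt
      (contDiff_infty.mp (contDiff_eval_ofReal Q) i).contDiffAt,
      iteratedDeriv_eval_taylorPoly_zero w (by omega), sub_self]
  have hsmooth : ContDiff ℝ ∞ (fun x : ℝ => r x - Q.eval (x : ℂ) / ((x : ℂ) ^ 2 + 1) ^ M) := by
    rw [hfactor]
    exact (hw.sub (contDiff_eval_ofReal Q)).mul (contDiff_inv_sq_add_one_pow M)
  obtain ⟨C, hC⟩ := isCompact_Icc.exists_bound_of_continuousOn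
    (hsmooth.continuous_iteratedDeriv (D + 1) (by norm_cast; exact le_top)).continuousOn
  exact ⟨C, fun n hn k hk => norm_iteratedDeriv_le_mul_abs_pow
    (hsmooth.of_le (by norm_cast; exact le_top)) hzero (fun t ht => hC t (abs_le.mp ht)) hn hk⟩

lemma exists_norm_iteratedDeriv_sub_eval_div_le (r : SchwartzMap ℝ ℂ) (p : ℂ[X]) (M e K : ℕ)
    (hdeg : p.natDegree + e ≤ 2 * M) : ∃ C, ∀ n ≤ K, ∀ k : ℝ, 1 ≤ |k| →
      ‖iteratedDeriv n (fun x : ℝ => r x - p.eval (x : ℂ) / ((x : ℂ) ^ 2 + 1) ^ M) k‖ ≤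
        C / |k| ^ e := by
  have hsingle : ∀ n, ∃ C, ∀ k : ℝ, 1 ≤ |k| →
      ‖iteratedDeriv n (fun x : ℝ => r x - p.eval (x : ℂ) / ((x : ℂ) ^ 2 + 1) ^ M) k‖ ≤
        C / |k| ^ e := fun n => by
    obtain ⟨B, hB⟩ := exists_norm_iteratedDeriv_eval_div_le p M n e (by omega)
    refine ⟨SchwartzMap.seminorm ℝ e n r + B, fun k hk => ?_⟩
    have hrat : ContDiff ℝ ∞ (fun x : ℝ => p.eval (x : ℂ) / ((x : ℂ) ^ 2 + 1) ^ M) := by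
      simpa only [div_eq_mul_inv] using (contDiff_eval_ofReal p).mul (contDiff_inv_sq_add_one_pow M)
    rw [iteratedDeriv_fun_sub (r.contDiffAt n) (contDiff_infty.mp hrat n).contDiffAt, add_div]
    refine (norm_sub_le _ _).trans (add_le_add ?_ (hB k hk))
    rw [le_div_iff₀ (pow_pos (one_pos.trans_le hk) e), mul_comm]
    exact r.le_seminorm' ℝ e n k
  choose C hC using hsingle
  obtain ⟨B, hB⟩ := ((Finset.range (K + 1)).image C).exists_le
  refine ⟨B, fun n hn k hk => (hC n k hk).trans ?_⟩
  gcongr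
  exact hB _ (Finset.mem_image_of_mem _ (Finset.mem_range.mpr (by omega)))

theorem rational_approximation_at_origin
    (r : SchwartzMap ℝ ℂ) (hsymm : ∀ k : ℝ, r k = -(starRingEnd ℂ) (r (-k)))
    (N : ℕ) :
    ∃ (a b : ℕ → ℝ) (r₀ : ℂ → ℂ),
      (∀ k : ℂ, r₀ k =
        (∑ j ∈ Finset.range (2 * N + 2), ((a j : ℂ) * k + Complex.I * (b j : ℂ)) * k ^ (2 * j)) /
          (k ^ 2 + 1) ^ (3 * N + 4)) ∧
      DifferentiableOn ℂ r₀ ({Complex.I, -Complex.I} : Set ℂ)ᶜ ∧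
      (∀ k : ℂ, k ≠ Complex.I → k ≠ -Complex.I →
        r₀ k = -(starRingEnd ℂ) (r₀ (-(starRingEnd ℂ) k))) ∧
      ∃ C : ℝ, 0 < C ∧ ∀ n : ℕ, n ≤ N + 1 → ∀ k : ℝ,
        (|k| ≤ 1 →
          ‖iteratedDeriv n (fun x : ℝ => r x - r₀ (x : ℂ)) k‖ ≤ C * |k| ^ (4 * N + 4 - n)) ∧
        (1 ≤ |k| →
          ‖iteratedDeriv n (fun x : ℝ => r x - r₀ (x : ℂ)) k‖ ≤ C / |k| ^ (2 * N + 5)) := by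
  set w := fun x : ℝ => ((x : ℂ) ^ 2 + 1) ^ (3 * N + 4) * r x
  have hw : ∀ x, w x = -conj (w (-x)) := conj_symm_sq_add_one_pow_mul hsymm (3 * N + 4)
  set Q := taylorPoly w (4 * N + 3 + 1) with hQ
  refine ⟨fun j => (taylorCoeff w (2 * j + 1)).re, fun j => (taylorCoeff w (2 * j)).im,
    fun z => Q.eval z / (z ^ 2 + 1) ^ (3 * N + 4), fun k => ?_,
    differentiableOn_eval_div_sq_add_one_pow Q _,
    fun k _ _ => eval_div_sq_add_one_pow_of_conj_symm (conj_eval_taylorPoly_neg_conj hw _) _ k, ?_⟩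
  · beta_reduce
    rw [hQ, show 4 * N + 3 + 1 = 2 * (2 * N + 2) by ring, eval_taylorPoly_of_conj_symm hw]
  obtain ⟨C₀, hC₀⟩ :=
    exists_norm_iteratedDeriv_sub_taylor_div_le (r.smooth ⊤) (3 * N + 4) (4 * N + 3)
  obtain ⟨C₁, hC₁⟩ := exists_norm_iteratedDeriv_sub_eval_div_le r Q (3 * N + 4) (2 * N + 5) (N + 1)
    (by grw [hQ, natDegree_taylorPoly_le]; omega)
  refine ⟨max (max C₀ C₁) 1, by positivity, fun n hn k => ⟨fun hk => ?_, fun hk => ?_⟩⟩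
  · exact (hC₀ n (by omega) k hk).trans (by gcongr; exact le_max_of_le_left (le_max_left _ _))
  · exact (hC₁ n hn k hk).trans (by gcongr; exact le_max_of_le_left (le_max_right _ _))
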